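/- Let R be the time reversal R(φ)(s) = φ(t−s) − φ(t) on C([0,t];ℝ). Then for every real z, T_z ∘ R ∘ T_z = R, and consequently R ∘ T_z = T_{−z} ∘ R. -/

import Mathlib

open MeasureTheory Real

noncomputable def pathA (φ : ℝ → ℝ) (s : ℝ) : ℝ := ∫ u in (0:ℝ)..s, Real.exp (2 * φ u)

noncomputable def pathT (t z : ℝ) (φ : ℝ → ℝ) (s : ℝ) : ℝ :=
  φ s - Real.log (1 + (pathA φ s / pathA φ t) * (Real.exp z - 1))

noncomputable def pathR (t : ℝ) (φ : ℝ → ℝ) (s : ℝ) : ℝ := φ (t - s) - φ t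

/-!
The normalized clock `a(s) = A_s(φ) / A_t(φ)` of `T_z φ` is the Möbius image
`a ↦ a e^z / (1 + a (e^z - 1))` of that of `φ`, and these maps compose additively in `z`,
so `T_w ∘ T_z = T_{z+w}` on `[0, t]` and `T_0 = id`. The reversal `R` replaces the clock by
`1 - a(t - s)`, and this conjugates `T_z` to `T_{-z}`: `R ∘ T_z = T_{-z} ∘ R`. Hence
`T_z ∘ R ∘ T_z = T_z ∘ T_{-z} ∘ R = R`.
-/

open Set

lemma one_add_mul_exp_sub_one_pos {a : ℝ} (ha : a ∈ Icc (0 : ℝ) 1) (z : ℝ) :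
    0 < 1 + a * (exp z - 1) := by
  rcases ha.2.eq_or_lt with rfl | ha1
  · simpa using exp_pos z
  · nlinarith [mul_nonneg ha.1 (exp_pos z).le]

lemma HasDerivAt.div_one_add_div_mul {F : ℝ → ℝ} {f x K m : ℝ} (hF : HasDerivAt F f x)
    (hx : 1 + F x / K * m ≠ 0) :
    HasDerivAt (fun u => F u / (1 + F u / K * m)) (f / (1 + F x / K * m) ^ 2) x := by
  have hD : HasDerivAt (fun u => 1 + F u / K * m) (f / K * m) x :=
    ((hF.div_const K).mul_const m).const_add 1
  have hquot := hF.div hD hx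
  rwa [show f * (1 + F x / K * m) - F x * (f / K * m) = f by ring] at hquot

section pathA

variable {φ f g : ℝ → ℝ} {s t : ℝ}

lemma pathA_zero (φ : ℝ → ℝ) : pathA φ 0 = 0 := intervalIntegral.integral_same

lemma pathA_congr (h : EqOn f g (uIcc 0 s)) : pathA f s = pathA g s :=
  intervalIntegral.integral_congr fun _ hu => by simp only [h hu]

lemma hasDerivAt_pathA (hφ : Continuous φ) (x : ℝ) :
    HasDerivAt (pathA φ) (exp (2 * φ x)) x :=
  ((by fun_prop : Continuous fun u => exp (2 * φ u)).integral_hasStrictDerivAt 0 x).hasDerivAt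

lemma continuous_pathA (hφ : Continuous φ) : Continuous (pathA φ) :=
  continuous_iff_continuousAt.2 fun x => (hasDerivAt_pathA hφ x).continuousAt

lemma strictMono_pathA (hφ : Continuous φ) : StrictMono (pathA φ) :=
  strictMono_of_hasDerivAt_pos (hasDerivAt_pathA hφ) fun _ => exp_pos _

lemma pathA_pos (hφ : Continuous φ) (ht : 0 < t) : 0 < pathA φ t :=
  pathA_zero φ ▸ strictMono_pathA hφ ht

lemma pathA_div_mem_Icc (hφ : Continuous φ) (ht : 0 < t) (hs : s ∈ Icc 0 t) :
    pathA φ s / pathA φ t ∈ Icc (0 : ℝ) 1 := by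
  have hpos := pathA_pos hφ ht
  refine ⟨div_nonneg ?_ hpos.le, (div_le_one hpos).2 ((strictMono_pathA hφ).monotone hs.2)⟩
  simpa [pathA_zero] using (strictMono_pathA hφ).monotone hs.1

lemma pathA_pathR (hf : Continuous f) (t s : ℝ) :
    pathA (pathR t f) s = exp (-(2 * f t)) * (pathA f t - pathA f (t - s)) := by
  have hint : ∀ a b, IntervalIntegrable (fun v => exp (2 * f v)) volume a b := fun a b =>
    (by fun_prop : Continuous fun v => exp (2 * f v)).intervalIntegrable a b
  have hshift : pathA (pathR t f) s = ∫ u in (0 : ℝ)..s, exp (-(2 * f t)) * exp (2 * f (t - u)) := by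
    refine intervalIntegral.integral_congr fun u _ => ?_
    rw [pathR, ← exp_add]
    congr 1
    ring
  rw [hshift, intervalIntegral.integral_const_mul,
    intervalIntegral.integral_comp_sub_left (fun v => exp (2 * f v)),
    sub_zero, pathA, pathA, intervalIntegral.integral_interval_sub_left (hint 0 t) (hint 0 (t - s))]

lemma pathA_pathR_div (hf : Continuous f) (ht : 0 < t) (s : ℝ) :
    pathA (pathR t f) s / pathA (pathR t f) t = 1 - pathA f (t - s) / pathA f t := by
  have hpos := pathA_pos hf ht
  rw [pathA_pathR hf, pathA_pathR hf, sub_self, pathA_zero, mul_div_mul_left _ _ (exp_ne_zero _),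
    sub_zero, sub_div, div_self hpos.ne']

end pathA

section pathT

variable {φ f g : ℝ → ℝ} {s t : ℝ}

lemma pathT_zero (t : ℝ) (φ : ℝ → ℝ) : pathT t 0 φ = φ := by
  funext s
  simp [pathT]

lemma pathT_congr (z : ℝ) (h : EqOn f g (Icc 0 t)) (hs : s ∈ Icc 0 t) :
    pathT t z f s = pathT t z g s := by
  have hsub : ∀ {r}, r ∈ Icc 0 t → uIcc 0 r ⊆ Icc 0 t := fun hr =>
    (uIcc_of_le hr.1).symm ▸ Icc_subset_Icc le_rfl hr.2
  have ht : t ∈ Icc 0 t := ⟨hs.1.trans hs.2, le_rfl⟩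
  simp only [pathT, h hs, pathA_congr (h.mono (hsub hs)), pathA_congr (h.mono (hsub ht))]

lemma pathT_right (z : ℝ) (h : pathA φ t ≠ 0) : pathT t z φ t = φ t - z := by
  rw [pathT, div_self h, one_mul, add_sub_cancel, log_exp]

lemma exp_two_mul_pathT (z : ℝ) (h : 0 < 1 + pathA φ s / pathA φ t * (exp z - 1)) :
    exp (2 * pathT t z φ s) = exp (2 * φ s) / (1 + pathA φ s / pathA φ t * (exp z - 1)) ^ 2 := by
  rw [pathT, mul_sub, exp_sub, ← Nat.cast_ofNat, ← log_pow, exp_log (pow_pos h 2)]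

lemma pathA_pathT (hφ : Continuous φ) (ht : 0 < t) (z : ℝ) (hs : s ∈ Icc 0 t) :
    pathA (pathT t z φ) s = pathA φ s / (1 + pathA φ s / pathA φ t * (exp z - 1)) := by
  have hD : ∀ u ∈ uIcc 0 s, 0 < 1 + pathA φ u / pathA φ t * (exp z - 1) := fun u hu =>
    one_add_mul_exp_sub_one_pos (pathA_div_mem_Icc hφ ht
      ⟨(uIcc_of_le hs.1 ▸ hu).1, (uIcc_of_le hs.1 ▸ hu).2.trans hs.2⟩) z
  have hderiv : ∀ u ∈ uIcc 0 s, HasDerivAt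
      (fun v => pathA φ v / (1 + pathA φ v / pathA φ t * (exp z - 1)))
      (exp (2 * pathT t z φ u)) u := fun u hu => by
    rw [exp_two_mul_pathT z (hD u hu)]
    exact (hasDerivAt_pathA hφ u).div_one_add_div_mul (hD u hu).ne'
  have hcont : ContinuousOn (fun u => exp (2 * pathT t z φ u)) (uIcc 0 s) := by
    have hA := continuous_pathA hφ
    have : ContinuousOn (pathT t z φ) (uIcc 0 s) :=
      hφ.continuousOn.sub (ContinuousOn.log (by fun_prop) fun u hu => (hD u hu).ne')
    fun_prop
  rw [pathA, intervalIntegral.integral_eq_sub_of_hasDerivAt hderiv hcont.intervalIntegrable,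
    pathA_zero, zero_div, sub_zero]

lemma pathA_pathT_right (hφ : Continuous φ) (ht : 0 < t) (z : ℝ) :
    pathA (pathT t z φ) t = pathA φ t * exp (-z) := by
  rw [pathA_pathT hφ ht z ⟨ht.le, le_rfl⟩, div_self (pathA_pos hφ ht).ne', one_mul,
    add_sub_cancel, exp_neg, div_eq_mul_inv]

theorem pathT_pathT (hφ : Continuous φ) (ht : 0 < t) (hs : s ∈ Icc 0 t) (z w : ℝ) :
    pathT t w (pathT t z φ) s = pathT t (z + w) φ s := by
  set a := pathA φ s / pathA φ t with ha_def
  have ha : a ∈ Icc (0 : ℝ) 1 := pathA_div_mem_Icc hφ ht hs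
  have hDz := one_add_mul_exp_sub_one_pos ha z
  have hDzw := one_add_mul_exp_sub_one_pos ha (z + w)
  have hclock : pathA (pathT t z φ) s / pathA (pathT t z φ) t
      = a * exp z / (1 + a * (exp z - 1)) := by
    have hA := (pathA_pos hφ ht).ne'
    rw [pathA_pathT hφ ht z hs, pathA_pathT_right hφ ht z, ha_def, exp_neg]
    field_simp
  have hmobius : 1 + a * exp z / (1 + a * (exp z - 1)) * (exp w - 1)
      = (1 + a * (exp (z + w) - 1)) / (1 + a * (exp z - 1)) := by
    rw [exp_add]
    field_simp
    ring
  rw [pathT, hclock, hmobius, log_div hDzw.ne' hDz.ne']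
  simp only [pathT]
  ring

theorem pathR_pathT (hφ : Continuous φ) (ht : 0 < t) (hs : s ∈ Icc 0 t) (z : ℝ) :
    pathR t (pathT t z φ) s = pathT t (-z) (pathR t φ) s := by
  set b := pathA φ (t - s) / pathA φ t with hb_def
  have hb : b ∈ Icc (0 : ℝ) 1 :=
    pathA_div_mem_Icc hφ ht ⟨sub_nonneg.2 hs.2, sub_le_self t hs.1⟩
  have hD := one_add_mul_exp_sub_one_pos hb z
  have hreversed : 1 + (1 - b) * (exp (-z) - 1) = exp (-z) * (1 + b * (exp z - 1)) := by
    rw [exp_neg]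
    field_simp
    ring
  conv_rhs => rw [pathT, pathA_pathR_div hφ ht, ← hb_def, hreversed,
    log_mul (exp_ne_zero _) hD.ne', log_exp]
  rw [pathR, pathT_right z (pathA_pos hφ ht).ne', pathT, pathR]
  ring

end pathT

theorem stmt4 (t : ℝ) (ht : 0 < t) (z : ℝ) (φ : ℝ → ℝ) (hφ : Continuous φ)
    (s : ℝ) (hs : 0 ≤ s) (hst : s ≤ t) :
    pathT t z (pathR t (pathT t z φ)) s = pathR t φ s ∧
    pathR t (pathT t z φ) s = pathT t (-z) (pathR t φ) s := by
  have hconj : EqOn (pathR t (pathT t z φ)) (pathT t (-z) (pathR t φ)) (Icc 0 t) :=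
    fun u hu => pathR_pathT hφ ht hu z
  have hRφ : Continuous (pathR t φ) := by unfold pathR; fun_prop
  refine ⟨?_, hconj ⟨hs, hst⟩⟩
  rw [pathT_congr z hconj ⟨hs, hst⟩, pathT_pathT hRφ ht ⟨hs, hst⟩, neg_add_cancel, pathT_zero]
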